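/- Let v be the first vertex of the path P satisfying the cover condition, and suppose v satisfies the strict cover condition. Then every minimum weight vertex cover of the entire path P contains C* := Partition(v) ∩ P_{⪯v}. -/

import Mathlib

open Finset

/-- `C` is a vertex cover of the subpath of the path `P = (v_0, …, v_{n-1})`
induced by the vertices `v_lo, v_{lo+1}, …, v_{hi-1}` (half-open interval `[lo, hi)`);
the edges of this subpath are `{v_i, v_{i+1}}` for `lo ≤ i` and `i + 1 < hi`. -/
def IsCoverOn (lo hi : ℕ) (C : Finset ℕ) : Prop :=
  (∀ j ∈ C, lo ≤ j ∧ j < hi) ∧ ∀ i : ℕ, lo ≤ i → i + 1 < hi → (i ∈ C ∨ i + 1 ∈ C)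

/-- The total weight `ω(C) = ∑_{v ∈ C} ω(v)` of a set of vertices. -/
def wsum (ω : ℕ → ℝ) (C : Finset ℕ) : ℝ := ∑ j ∈ C, ω j

/-- `C` is a minimum weight vertex cover (MWVC) of the subpath on the vertices `[lo, hi)`. -/
def IsMWVCOn (ω : ℕ → ℝ) (lo hi : ℕ) (C : Finset ℕ) : Prop :=
  IsCoverOn lo hi C ∧ ∀ D : Finset ℕ, IsCoverOn lo hi D → wsum ω C ≤ wsum ω D

/-- `Partition(v_l) ∩ P_{⪯ v_l}`: the vertices up to (and including) `v_l` lying on the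
same side of the path's bipartition as `v_l`. -/
def sameSide (l : ℕ) : Finset ℕ := (range (l + 1)).filter fun j => j % 2 = l % 2

/-- `P_{⪯ v_l} ∖ Partition(v_l)`: the vertices up to `v_l` on the opposite side. -/
def otherSide (l : ℕ) : Finset ℕ := (range (l + 1)).filter fun j => j % 2 ≠ l % 2

/-- `v_l` satisfies the (weak) cover condition. -/
def CoverCond (ω : ℕ → ℝ) (l : ℕ) : Prop := wsum ω (sameSide l) ≤ wsum ω (otherSide l)

/-- `v_l` satisfies the strict cover condition. -/
def StrictCoverCond (ω : ℕ → ℝ) (l : ℕ) : Prop := wsum ω (sameSide l) < wsum ω (otherSide l)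

/-!
As long as no vertex before `v_m` satisfies the cover condition, induction along the path shows
that among the covers of `P_{⪯ v_m}` the alternating set ending in `v_m` is the unique lightest
one containing `v_m`, and the alternating set ending in `v_{m-1}` the unique lightest one
avoiding `v_m`. The restriction of a minimum cover `C` of `P` to `P_{⪯ v_l}` can be exchanged
for `C* = Partition(v_l) ∩ P_{⪯ v_l}`, so it weighs at most `ω(C*)`. By the strict cover
condition it therefore cannot avoid `v_l`, and so it equals `C*`.
-/

namespace IsCoverOn

variable {lo m : ℕ} {E : Finset ℕ}

theorem erase_last (hE : IsCoverOn lo (m + 2) E) : IsCoverOn lo (m + 1) (E.erase (m + 1)) := by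
  refine ⟨fun j hj => ?_, fun i hlo hi => ?_⟩
  · obtain ⟨hne, hj⟩ := mem_erase.mp hj
    have := hE.1 j hj
    omega
  · simp only [mem_erase]
    rcases hE.2 i hlo (by omega) with h | h
    · exact Or.inl ⟨by omega, h⟩
    · exact Or.inr ⟨by omega, h⟩

theorem of_notMem_last (hE : IsCoverOn lo (m + 2) E) (hm : m + 1 ∉ E) :
    IsCoverOn lo (m + 1) E := by
  refine ⟨fun j hj => ?_, fun i hlo hi => hE.2 i hlo (by omega)⟩
  have := hE.1 j hj
  have : j ≠ m + 1 := by rintro rfl; exact hm hj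
  omega

theorem mem_of_notMem_last (hE : IsCoverOn lo (m + 2) E) (hlo : lo ≤ m) (hm : m + 1 ∉ E) :
    m ∈ E :=
  (hE.2 m hlo (by omega)).resolve_right hm

theorem filter_le {hi : ℕ} (hE : IsCoverOn lo hi E) (hm : m < hi) :
    IsCoverOn lo (m + 1) (E.filter (· ≤ m)) := by
  refine ⟨fun j hj => ?_, fun i hlo hi => ?_⟩
  · obtain ⟨hj, hjm⟩ := mem_filter.mp hj
    exact ⟨(hE.1 j hj).1, by omega⟩
  · simp only [mem_filter]
    rcases hE.2 i hlo (by omega) with h | h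
    · exact Or.inl ⟨h, by omega⟩
    · exact Or.inr ⟨h, by omega⟩

theorem union_filter_lt {hi : ℕ} {F : Finset ℕ} (hE : IsCoverOn lo hi E)
    (hF : IsCoverOn lo (m + 1) F) (hmF : m ∈ F) (hm : m < hi) :
    IsCoverOn lo hi (F ∪ E.filter (m < ·)) := by
  refine ⟨fun j hj => ?_, fun i hlo hi => ?_⟩
  · rcases mem_union.mp hj with h | h
    · have := hF.1 j h
      omega
    · exact hE.1 j (mem_filter.mp h).1
  · simp only [mem_union, mem_filter]
    by_cases him : i < m
    · rcases hF.2 i hlo (by omega) with h | h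
      · exact Or.inl (Or.inl h)
      · exact Or.inr (Or.inl h)
    · by_cases hieq : i = m
      · exact Or.inl (Or.inl (hieq ▸ hmF))
      · rcases hE.2 i hlo hi with h | h
        · exact Or.inl (Or.inr ⟨h, by omega⟩)
        · exact Or.inr (Or.inr ⟨h, by omega⟩)

end IsCoverOn

theorem sameSide_isCoverOn (m : ℕ) : IsCoverOn 0 (m + 1) (sameSide m) := by
  refine ⟨fun j hj => ?_, fun i _ hi => ?_⟩
  · simp only [sameSide, mem_filter, mem_range] at hj
    omega
  · simp only [sameSide, mem_filter, mem_range]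
    omega

theorem self_mem_sameSide (m : ℕ) : m ∈ sameSide m := by
  simp [sameSide]

theorem otherSide_zero : otherSide 0 = ∅ := by
  decide

theorem otherSide_succ (m : ℕ) : otherSide (m + 1) = sameSide m := by
  ext j
  simp only [otherSide, sameSide, mem_filter, mem_range]
  omega

theorem sameSide_succ (m : ℕ) : sameSide (m + 1) = insert (m + 1) (otherSide m) := by
  ext j
  simp only [sameSide, otherSide, mem_filter, mem_range, mem_insert]
  omega

theorem wsum_sameSide_succ (ω : ℕ → ℝ) (m : ℕ) :
    wsum ω (sameSide (m + 1)) = ω (m + 1) + wsum ω (otherSide m) := by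
  rw [sameSide_succ, wsum, wsum, sum_insert]
  simp [otherSide]

theorem wsum_eq_add_wsum_erase (ω : ℕ → ℝ) {E : Finset ℕ} {j : ℕ} (hj : j ∈ E) :
    wsum ω E = ω j + wsum ω (E.erase j) :=
  (add_sum_erase E ω hj).symm

theorem eq_or_wsum_lt_of_isCoverOn {ω : ℕ → ℝ} {m : ℕ} (hfirst : ∀ j < m, ¬ CoverCond ω j)
    {E : Finset ℕ} (hE : IsCoverOn 0 (m + 1) E) :
    (m ∈ E → E = sameSide m ∨ wsum ω (sameSide m) < wsum ω E) ∧
      (m ∉ E → E = otherSide m ∨ wsum ω (otherSide m) < wsum ω E) := by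
  induction m generalizing E with
  | zero =>
    have hE0 : ∀ j ∈ E, j = 0 := fun j hj => by have := hE.1 j hj; omega
    refine ⟨fun h0 => Or.inl ?_, fun h0 => Or.inl ?_⟩
    · ext j
      simp only [sameSide, mem_filter, mem_range]
      constructor
      · intro hj
        have := hE0 j hj
        omega
      · rintro ⟨hj, -⟩
        obtain rfl : j = 0 := by omega
        exact h0
    · rw [otherSide_zero, eq_empty_iff_forall_notMem]
      intro j hj
      exact h0 (hE0 j hj ▸ hj)
  | succ m ih =>
    have ih := @ih fun j hj => hfirst j (by omega)
    have hgap : wsum ω (otherSide m) < wsum ω (sameSide m) := not_le.mp (hfirst m (by omega))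
    refine ⟨fun hlast => ?_, fun hlast => ?_⟩
    · have hE' := hE.erase_last
      rw [wsum_eq_add_wsum_erase ω hlast, wsum_sameSide_succ]
      by_cases hm : m ∈ E.erase (m + 1)
      · have hle : wsum ω (sameSide m) ≤ wsum ω (E.erase (m + 1)) := by
          rcases (ih hE').1 hm with h | h
          · rw [h]
          · exact h.le
        exact Or.inr (by linarith)
      · rcases (ih hE').2 hm with h | h
        · left
          rw [sameSide_succ, ← h, insert_erase hlast]
        · exact Or.inr (by linarith)
    · rw [otherSide_succ]
      exact (ih (hE.of_notMem_last hlast)).1 (hE.mem_of_notMem_last (Nat.zero_le m) hlast)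

theorem IsMWVCOn.wsum_filter_le_le {ω : ℕ → ℝ} {lo n m : ℕ} {C F : Finset ℕ}
    (hC : IsMWVCOn ω lo n C) (hF : IsCoverOn lo (m + 1) F) (hmF : m ∈ F) (hm : m < n) :
    wsum ω (C.filter (· ≤ m)) ≤ wsum ω F := by
  have hdisj : Disjoint F (C.filter (m < ·)) :=
    disjoint_left.mpr fun j hjF hjC => by
      have := hF.1 j hjF
      have := (mem_filter.mp hjC).2
      omega
  have hsplit : wsum ω C = wsum ω (C.filter (· ≤ m)) + wsum ω (C.filter (m < ·)) := by
    simp only [wsum, ← not_le]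
    exact (sum_filter_add_sum_filter_not C _ ω).symm
  have hunion : wsum ω (F ∪ C.filter (m < ·)) = wsum ω F + wsum ω (C.filter (m < ·)) :=
    sum_union hdisj
  have hmin := hC.2 _ (hC.1.union_filter_lt hF hmF hm)
  linarith

theorem stmt_3_general (n l : ℕ) (ω : ℕ → ℝ) (hl : l < n)
    (hfirst : ∀ j, j < l → ¬ CoverCond ω j)
    (hstrict : StrictCoverCond ω l) :
    ∀ C : Finset ℕ, IsMWVCOn ω 0 n C → sameSide l ⊆ C := by
  intro C hC
  set E := C.filter (· ≤ l)
  have hE : IsCoverOn 0 (l + 1) E := hC.1.filter_le hl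
  have hmin : wsum ω E ≤ wsum ω (sameSide l) :=
    hC.wsum_filter_le_le (sameSide_isCoverOn l) (self_mem_sameSide l) hl
  by_cases hlE : l ∈ E
  · rcases (eq_or_wsum_lt_of_isCoverOn hfirst hE).1 hlE with h | h
    · exact h ▸ filter_subset _ C
    · exact absurd hmin (not_le.mpr h)
  · have hother : wsum ω (otherSide l) ≤ wsum ω E := by
      rcases (eq_or_wsum_lt_of_isCoverOn hfirst hE).2 hlE with h | h
      · rw [h]
      · exact h.le
    exact absurd hstrict (not_lt.mpr (hother.trans hmin))

/-- If `v_l` is the first vertex of the path satisfying the cover condition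
and it satisfies the strict cover condition, then every MWVC of the whole path contains
`Partition(v_l) ∩ P_{⪯ v_l}`. -/
theorem stmt_3 (n l : ℕ) (ω : ℕ → ℝ) (hl : l < n)
    (hcc : CoverCond ω l) (hfirst : ∀ j, j < l → ¬ CoverCond ω j)
    (hstrict : StrictCoverCond ω l) :
    ∀ C : Finset ℕ, IsMWVCOn ω 0 n C → sameSide l ⊆ C :=
  stmt_3_general n l ω hl hfirst hstrict
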